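/- (Validity of inequality (10), dominating inequality.) Let f be monotone k-submodular with f(∅) = 0 on X(N,k). Let Ŝ ∈ X(N,k) with Ŝ_q = {i_{q,1},…,i_{q,T_q}} in some fixed order, and let x ∈ {0,1}^{k×n}. Define S_q = Ŝ_q \ {i : x_{q,i} = 1}. Then f(S) ≥ f(Ŝ) − Σ_{q=1}^k Σ_{t=1}^{T_q} ρ_{q,i_{q,t}}(Ŝ_{q,(t)}) · x_{q,i_{q,t}}, where Ŝ_{q,(t)} = (Ŝ_1,…,Ŝ_{q-1}, {i_{q,1},…,i_{q,t-1}}, ∅,…,∅). -/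

import Mathlib

open Finset

/-- A `k`-tuple of subsets of `N` is "k-disjoint" if its components are pairwise disjoint,
i.e. it belongs to `X(N,k)`. -/
def IsKDisjoint {N : Type*} {k : ℕ} (S : Fin k → Finset N) : Prop :=
  ∀ q q' : Fin k, q ≠ q' → Disjoint (S q) (S q')

/-- Componentwise intersection `X ⊓ Y`. -/
def kInf {N : Type*} [DecidableEq N] {k : ℕ} (X Y : Fin k → Finset N) : Fin k → Finset N :=
  fun q => X q ∩ Y q

/-- The operation `X ⊔ Y`, whose `q`-th component is
`(X_q ∪ Y_q) \ ⋃_{p ≠ q} (X_p ∪ Y_p)`. -/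
def kSup {N : Type*} [DecidableEq N] {k : ℕ} (X Y : Fin k → Finset N) : Fin k → Finset N :=
  fun q => (X q ∪ Y q) \ ((Finset.univ.erase q).biUnion fun p => X p ∪ Y p)

/-- `f` is a `k`-submodular function on `X(N,k)`. -/
def KSubmodular {N : Type*} [DecidableEq N] {k : ℕ} (f : (Fin k → Finset N) → ℝ) : Prop :=
  ∀ X Y : Fin k → Finset N, IsKDisjoint X → IsKDisjoint Y →
    f (kInf X Y) + f (kSup X Y) ≤ f X + f Y

/-- `f` is monotone on `X(N,k)` with respect to componentwise inclusion. -/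
def KMonotone {N : Type*} [DecidableEq N] {k : ℕ} (f : (Fin k → Finset N) → ℝ) : Prop :=
  ∀ X Y : Fin k → Finset N, IsKDisjoint X → IsKDisjoint Y →
    (∀ r, X r ⊆ Y r) → f X ≤ f Y

/-- Marginal gain `ρ_{q,i}(X) = f(X_1,…,X_q ∪ {i},…,X_k) − f(X)`. -/
def marg {N : Type*} [DecidableEq N] {k : ℕ} (f : (Fin k → Finset N) → ℝ)
    (X : Fin k → Finset N) (q : Fin k) (i : N) : ℝ :=
  f (Function.update X q (insert i (X q))) - f X

/-- The partial tuple `S_{q,(t)}`: components before `q` are kept in full, the `q`-th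
component consists of the first `t` elements of the ordering `L q` of `S q`, and
later components are empty. -/
def partialTuple {N : Type*} [DecidableEq N] {k : ℕ} (S : Fin k → Finset N)
    (L : Fin k → List N) (q : Fin k) (t : ℕ) : Fin k → Finset N :=
  fun r => if r < q then S r else if r = q then ((L q).take t).toFinset else ∅

section MainAux
variable {N : Type*} [DecidableEq N] {k : ℕ}

lemma isKDisjoint_mono {X Y : Fin k → Finset N} (hY : IsKDisjoint Y)
    (hXY : ∀ r, X r ⊆ Y r) : IsKDisjoint X :=
  fun p p' h => Finset.disjoint_of_subset_left (hXY p)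
    (Finset.disjoint_of_subset_right (hXY p') (hY p p' h))

lemma isKDisjoint_update {X : Fin k → Finset N} (hX : IsKDisjoint X)
    (q : Fin k) (i : N) (hi : ∀ r, i ∉ X r) :
    IsKDisjoint (Function.update X q (insert i (X q))) := by
  intro p p' hpp'
  rcases eq_or_ne p q with rfl | hp
  · have hp' : p' ≠ p := hpp'.symm
    simp [Function.update_of_ne hp', Finset.disjoint_insert_left, hi p', hX _ _ hpp']
  · rcases eq_or_ne p' q with rfl | hp'
    · simp [Function.update_of_ne hp, Finset.disjoint_insert_right, hi p, hX _ _ hpp']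
    · simp [Function.update_of_ne hp, Function.update_of_ne hp', hX _ _ hpp']

lemma marg_antitone {f : (Fin k → Finset N) → ℝ} (hsub : KSubmodular f)
    {X Y : Fin k → Finset N} (hX : IsKDisjoint X) (hY : IsKDisjoint Y)
    (hXY : ∀ r, X r ⊆ Y r) (q : Fin k) (i : N) (hi : ∀ r, i ∉ Y r) :
    marg f Y q i ≤ marg f X q i := by
  have hiX : ∀ r, i ∉ X r := fun r h => hi r (hXY r h)
  have h := hsub (Function.update X q (insert i (X q))) Y
    (isKDisjoint_update hX q i hiX) hY
  have h1 : kInf (Function.update X q (insert i (X q))) Y = X := by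
    funext r
    rcases eq_or_ne r q with rfl | hr
    · simp only [kInf, Function.update_self]
      rw [Finset.insert_inter_of_notMem (hi r), Finset.inter_eq_left.2 (hXY r)]
    · simp only [kInf, Function.update_of_ne hr]
      exact Finset.inter_eq_left.2 (hXY r)
  have h2 : kSup (Function.update X q (insert i (X q))) Y
      = Function.update Y q (insert i (Y q)) := by
    funext r
    simp only [kSup]
    rcases eq_or_ne r q with rfl | hr
    · rw [Function.update_self, Function.update_self]
      have hun : insert i (X r) ∪ Y r = insert i (Y r) := by
        rw [Finset.insert_union, Finset.union_eq_right.2 (hXY r)]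
      rw [hun, Finset.sdiff_eq_self_iff_disjoint.2 ?_]
      rw [Finset.disjoint_biUnion_right]
      intro p hp
      rw [Finset.mem_erase] at hp
      rw [Function.update_of_ne hp.1, Finset.disjoint_insert_left]
      constructor
      · simp only [Finset.mem_union]
        rintro (h | h)
        · exact hiX p h
        · exact hi p h
      · refine Finset.disjoint_union_right.2 ⟨?_, hY r p (Ne.symm hp.1)⟩
        exact Finset.disjoint_of_subset_right (hXY p) (hY r p (Ne.symm hp.1))
    · rw [Function.update_of_ne hr, Function.update_of_ne hr]
      have hun : X r ∪ Y r = Y r := Finset.union_eq_right.2 (hXY r)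
      rw [hun, Finset.sdiff_eq_self_iff_disjoint.2 ?_]
      rw [Finset.disjoint_biUnion_right]
      intro p hp
      rw [Finset.mem_erase] at hp
      rcases eq_or_ne p q with rfl | hpq
      · rw [Function.update_self, Finset.insert_union, Finset.union_eq_right.2 (hXY p),
          Finset.disjoint_insert_right]
        exact ⟨hi r, hY r p (Ne.symm hp.1)⟩
      · rw [Function.update_of_ne hpq]
        refine Finset.disjoint_union_right.2 ⟨?_, hY r p (Ne.symm hp.1)⟩
        exact Finset.disjoint_of_subset_right (hXY p) (hY r p (Ne.symm hp.1))
  rw [h1, h2] at h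
  unfold marg
  linarith

end MainAux

def chainZ {N : Type*} [DecidableEq N] {k : ℕ} (Shat S : Fin k → Finset N)
    (L : Fin k → List N) (q t : ℕ) : Fin k → Finset N :=
  fun r => if (r : ℕ) < q then Shat r
    else if (r : ℕ) = q then S r ∪ ((L r).take t).toFinset else S r

section Chain
variable {N : Type*} [DecidableEq N] {k : ℕ} (Shat S : Fin k → Finset N) (L : Fin k → List N)

lemma chainZ_zero : chainZ Shat S L 0 0 = S := by
  funext r
  simp [chainZ]

lemma chainZ_top : chainZ Shat S L k 0 = Shat := by
  funext r
  simp [chainZ, r.isLt]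

lemma chainZ_succ_zero (hL : ∀ r, (L r).toFinset = Shat r) (hS : ∀ r, S r ⊆ Shat r)
    (q : ℕ) (hq : q < k) :
    chainZ Shat S L q (L ⟨q, hq⟩).length = chainZ Shat S L (q + 1) 0 := by
  funext r
  simp only [chainZ]
  rcases lt_trichotomy (r : ℕ) q with h | h | h
  · rw [if_pos h, if_pos (Nat.lt_succ_of_lt h)]
  · have hr : r = ⟨q, hq⟩ := Fin.ext h
    rw [if_neg (by omega), if_pos h, if_pos (by omega)]
    subst hr
    rw [List.take_length, hL ⟨q, hq⟩]
    exact Finset.union_eq_right.2 (hS ⟨q, hq⟩)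
  · rw [if_neg (by omega), if_neg (by omega), if_neg (by omega)]
    rcases eq_or_ne (r : ℕ) (q + 1) with h' | h'
    · rw [if_pos h']
      simp
    · rw [if_neg h']

lemma chainZ_subset (hL : ∀ r, (L r).toFinset = Shat r) (hS : ∀ r, S r ⊆ Shat r)
    (q t : ℕ) (r : Fin k) : chainZ Shat S L q t r ⊆ Shat r := by
  simp only [chainZ]
  split_ifs with h1 h2
  · exact subset_rfl
  · intro a ha
    rcases Finset.mem_union.1 ha with h | h
    · exact hS r h
    · rw [← hL r]
      exact List.mem_toFinset.2 (List.take_subset _ _ (List.mem_toFinset.1 h))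
  · exact hS r

lemma partialTuple_subset_shat (hL : ∀ r, (L r).toFinset = Shat r)
    (q : Fin k) (t : ℕ) (r : Fin k) : partialTuple Shat L q t r ⊆ Shat r := by
  simp only [partialTuple]
  split_ifs with h1 h2
  · exact subset_rfl
  · subst h2
    intro a ha
    rw [← hL r]
    exact List.mem_toFinset.2 (List.take_subset _ _ (List.mem_toFinset.1 ha))
  · exact Finset.empty_subset _

end Chain

lemma chain_step {N : Type*} [DecidableEq N] {k : ℕ}
    (f : (Fin k → Finset N) → ℝ)
    (hmono : KMonotone f) (hsub : KSubmodular f)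
    (Shat : Fin k → Finset N) (hShat : IsKDisjoint Shat)
    (L : Fin k → List N) (hnodup : ∀ q, (L q).Nodup)
    (hL : ∀ q, (L q).toFinset = Shat q)
    (x : Fin k → N → Bool) (S : Fin k → Finset N)
    (hSdef : ∀ q, S q = (Shat q).filter (fun i => x q i = false))
    (q : ℕ) (hq : q < k) (t : ℕ) (ht : t < (L ⟨q, hq⟩).length) :
    f (chainZ Shat S L q (t + 1)) ≤ f (chainZ Shat S L q t)
      + marg f (partialTuple Shat L ⟨q, hq⟩ t) ⟨q, hq⟩ ((L ⟨q, hq⟩).get ⟨t, ht⟩)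
        * (if x ⟨q, hq⟩ ((L ⟨q, hq⟩).get ⟨t, ht⟩) then (1 : ℝ) else 0) := by
  have hSsub : ∀ r, S r ⊆ Shat r := fun r => by
    rw [hSdef]; exact Finset.filter_subset _ _
  set qF : Fin k := ⟨q, hq⟩ with hqF
  set i : N := (L qF).get ⟨t, ht⟩ with hi
  have hiShat : i ∈ Shat qF := by
    rw [← hL qF]
    exact List.mem_toFinset.2 (List.get_mem _ _)
  have htakes : (L qF).take (t + 1) = (L qF).take t ++ [i] := by
    rw [hi, List.take_succ, List.getElem?_eq_getElem ht]
    simp [List.get_eq_getElem]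
  by_cases hx : x qF i
  · -- element removed
    have hiS : i ∉ S qF := by
      rw [hSdef]
      simp [hx]
    have hitake : i ∉ ((L qF).take t).toFinset := by
      have hnd := (hnodup qF).sublist (List.take_sublist (t + 1) (L qF))
      rw [htakes, List.nodup_append] at hnd
      intro hmem
      exact hnd.2.2 i (List.mem_toFinset.1 hmem) i (List.mem_singleton_self i) rfl
    have hiZ : ∀ r, i ∉ chainZ Shat S L q t r := by
      intro r
      by_cases hr : r = qF
      · rw [hr]
        have hz : chainZ Shat S L q t qF = S qF ∪ ((L qF).take t).toFinset := by
          simp [chainZ, hqF]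
        rw [hz]
        simp only [Finset.mem_union]
        rintro (h | h)
        · exact hiS h
        · exact hitake h
      · intro hmem
        exact Finset.disjoint_left.1 (hShat qF r fun h => hr h.symm) hiShat
          (chainZ_subset Shat S L hL hSsub q t r hmem)
    have hupd : chainZ Shat S L q (t + 1)
        = Function.update (chainZ Shat S L q t) qF (insert i (chainZ Shat S L q t qF)) := by
      funext r
      by_cases hr : r = qF
      · rw [hr, Function.update_self]
        have hz : ∀ u, chainZ Shat S L q u qF = S qF ∪ ((L qF).take u).toFinset := by
          intro u; simp [chainZ, hqF]
        rw [hz, hz, htakes]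
        ext a
        simp only [Finset.mem_union, Finset.mem_insert, List.mem_toFinset,
          List.mem_append, List.mem_singleton]
        tauto
      · rw [Function.update_of_ne hr]
        have h2 : (r : ℕ) ≠ q := fun hh => hr (Fin.ext hh)
        simp [chainZ, h2]
    have hPsub : ∀ r, partialTuple Shat L qF t r ⊆ chainZ Shat S L q t r := by
      intro r
      simp only [partialTuple, chainZ, Fin.lt_def]
      by_cases h1 : (r : ℕ) < q
      · simp [h1, show r < qF from h1]
      · rw [if_neg h1, if_neg h1]
        by_cases h2 : r = qF
        · subst h2
          rw [if_pos rfl, if_pos rfl]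
          exact Finset.subset_union_right
        · rw [if_neg h2, if_neg (fun hh => h2 (Fin.ext hh))]
          exact Finset.empty_subset _
    have hPdisj : IsKDisjoint (partialTuple Shat L qF t) :=
      isKDisjoint_mono hShat (partialTuple_subset_shat Shat L hL qF t)
    have hZdisj : IsKDisjoint (chainZ Shat S L q t) :=
      isKDisjoint_mono hShat (chainZ_subset Shat S L hL hSsub q t)
    have hmarg := marg_antitone hsub hPdisj hZdisj hPsub qF i hiZ
    rw [hupd, if_pos hx, mul_one]
    have : marg f (chainZ Shat S L q t) qF i
        = f (Function.update (chainZ Shat S L q t) qF (insert i (chainZ Shat S L q t qF)))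
          - f (chainZ Shat S L q t) := rfl
    linarith [hmarg, this]
  · -- element kept
    have hiS : i ∈ S qF := by
      rw [hSdef]
      simp only [Finset.mem_filter]
      exact ⟨hiShat, by simpa using hx⟩
    have heq : chainZ Shat S L q (t + 1) = chainZ Shat S L q t := by
      funext r
      by_cases hr : r = qF
      · rw [hr]
        have hz : ∀ u, chainZ Shat S L q u qF = S qF ∪ ((L qF).take u).toFinset := by
          intro u; simp [chainZ, hqF]
        rw [hz, hz, htakes]
        ext a
        simp only [Finset.mem_union, List.mem_toFinset, List.mem_append, List.mem_singleton]
        constructor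
        · rintro (h | h | rfl)
          · exact Or.inl h
          · exact Or.inr h
          · exact Or.inl hiS
        · rintro (h | h)
          · exact Or.inl h
          · exact Or.inr (Or.inl h)
      · have h2 : (r : ℕ) ≠ q := fun hh => hr (Fin.ext hh)
        simp [chainZ, h2]
    rw [heq, if_neg hx, mul_zero, add_zero]

/-- Validity of inequality (10): the lower bound with marginal gains evaluated at the
partial tuples `Ŝ_{q,(t)}`. -/
theorem valid_inequality_ten
    {N : Type*} [Fintype N] [DecidableEq N] {k : ℕ}
    (f : (Fin k → Finset N) → ℝ)
    (hmono : KMonotone f) (hsub : KSubmodular f)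
    (hzero : f (fun _ => ∅) = 0)
    (Shat : Fin k → Finset N) (hShat : IsKDisjoint Shat)
    (L : Fin k → List N)
    (hnodup : ∀ q, (L q).Nodup)
    (hL : ∀ q, (L q).toFinset = Shat q)
    (x : Fin k → N → Bool)
    (S : Fin k → Finset N)
    (hSdef : ∀ q, S q = (Shat q).filter (fun i => x q i = false)) :
    f Shat - ∑ q : Fin k, ∑ t : Fin (L q).length,
        marg f (partialTuple Shat L q t.val) q ((L q).get t)
          * (if x q ((L q).get t) then (1 : ℝ) else 0)
      ≤ f S := by
  classical
  have hSsub : ∀ r, S r ⊆ Shat r := fun r => by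
    rw [hSdef]; exact Finset.filter_subset _ _
  -- per-block telescoping
  have hblock : ∀ (q : ℕ) (hq : q < k),
      f (chainZ Shat S L (q + 1) 0) ≤ f (chainZ Shat S L q 0)
        + ∑ t : Fin (L ⟨q, hq⟩).length,
            marg f (partialTuple Shat L ⟨q, hq⟩ t.val) ⟨q, hq⟩ ((L ⟨q, hq⟩).get t)
              * (if x ⟨q, hq⟩ ((L ⟨q, hq⟩).get t) then (1 : ℝ) else 0) := by
    intro q hq
    have key : ∀ t, ∀ htl : t ≤ (L ⟨q, hq⟩).length,
        f (chainZ Shat S L q t) ≤ f (chainZ Shat S L q 0)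
          + ∑ t' ∈ Finset.range t, (fun u => if hu : u < (L ⟨q, hq⟩).length then
              marg f (partialTuple Shat L ⟨q, hq⟩ u) ⟨q, hq⟩ ((L ⟨q, hq⟩).get ⟨u, hu⟩)
                * (if x ⟨q, hq⟩ ((L ⟨q, hq⟩).get ⟨u, hu⟩) then (1 : ℝ) else 0) else 0) t' := by
      intro t
      induction t with
      | zero => intro _; simp
      | succ t ih =>
        intro hts
        have ht : t < (L ⟨q, hq⟩).length := hts
        have hstep := chain_step f hmono hsub Shat hShat L hnodup hL x S hSdef q hq t ht
        have h2 := ih (le_of_lt ht)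
        rw [Finset.sum_range_succ]
        simp only [dif_pos ht]
        linarith
    have hfin := key (L ⟨q, hq⟩).length le_rfl
    rw [chainZ_succ_zero Shat S L hL hSsub q hq] at hfin
    rw [← Fin.sum_univ_eq_sum_range] at hfin
    refine le_trans hfin (le_of_eq ?_)
    congr 1
    refine Finset.sum_congr rfl fun t _ => ?_
    simp only [dif_pos t.isLt, Fin.eta]
  -- outer telescoping
  have outer : ∀ q, q ≤ k → f (chainZ Shat S L q 0) ≤ f S
      + ∑ q' ∈ Finset.range q, (fun p => if hp : p < k then
            ∑ t : Fin (L ⟨p, hp⟩).length,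
              marg f (partialTuple Shat L ⟨p, hp⟩ t.val) ⟨p, hp⟩ ((L ⟨p, hp⟩).get t)
                * (if x ⟨p, hp⟩ ((L ⟨p, hp⟩).get t) then (1 : ℝ) else 0) else 0) q' := by
    intro q
    induction q with
    | zero => intro _; rw [chainZ_zero]; simp
    | succ q ih =>
      intro hq
      have hqk : q < k := hq
      have h1 := hblock q hqk
      have h2 := ih (le_of_lt hqk)
      rw [Finset.sum_range_succ]
      simp only [dif_pos hqk]
      linarith
  have hfinal := outer k le_rfl
  rw [chainZ_top, ← Fin.sum_univ_eq_sum_range] at hfinal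
  have hsum : ∑ q : Fin k, (fun p => if hp : p < k then
        ∑ t : Fin (L ⟨p, hp⟩).length,
          marg f (partialTuple Shat L ⟨p, hp⟩ t.val) ⟨p, hp⟩ ((L ⟨p, hp⟩).get t)
            * (if x ⟨p, hp⟩ ((L ⟨p, hp⟩).get t) then (1 : ℝ) else 0) else 0) q.val
      = ∑ q : Fin k, ∑ t : Fin (L q).length,
          marg f (partialTuple Shat L q t.val) q ((L q).get t)
            * (if x q ((L q).get t) then (1 : ℝ) else 0) := by
    refine Finset.sum_congr rfl fun q _ => ?_
    simp only [dif_pos q.isLt, Fin.eta]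
  rw [hsum] at hfinal
  linarith
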